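/- Fix d ∈ ℕ, α ∈ (0, 1/4], n ∈ ℕ, m ∈ [n], τ ∈ ℝ, σ, γ, λ > 0 and θ > 1, and write P' := P_Mon,d(σ) ∩ P_Reg,d(τ, θ, γ, λ). There exists c ∈ (0,1), depending only on d, such that sup over P ∈ P' of the inf over Â ∈ Â^U_{n,m}(τ, α, P') of E_P μ(X_τ(η) \ Â(D)) is at least c · m^{−1/d}, where μ and η denote the covariate marginal and regression function of P and D ∼ P^n. -/

import Mathlib

open MeasureTheory ProbabilityTheory Real Set
open scoped ENNReal Classical

noncomputable section

/-- `log_+ x := log (x ∨ e)`. -/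
def logp (x : ℝ) : ℝ := Real.log (max x (Real.exp 1))

/-- The σ-algebra generated by the covariate `X = Prod.fst`. -/
def mX (d : ℕ) : MeasurableSpace ((Fin d → ℝ) × ℝ) :=
  MeasurableSpace.comap Prod.fst inferInstance

/-- `η` is (a version of) the regression function `x ↦ E[Y | X = x]` of `P`. -/
def IsRegFn (d : ℕ) (P : Measure ((Fin d → ℝ) × ℝ)) (η : (Fin d → ℝ) → ℝ) : Prop :=
  Measurable η ∧ (fun p => η p.1) =ᵐ[P] P[fun p => p.2 | mX d]

/-- Conditionally on `X`, `Y - η X` is sub-Gaussian with variance parameter `σ²`. -/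
def CondSubG (d : ℕ) (σ : ℝ) (P : Measure ((Fin d → ℝ) × ℝ)) (η : (Fin d → ℝ) → ℝ) : Prop :=
  ∀ t : ℝ, Integrable (fun p => Real.exp (t * (p.2 - η p.1))) P ∧
    (P[fun p => Real.exp (t * (p.2 - η p.1)) | mX d])
      ≤ᵐ[P] fun _ => Real.exp (σ ^ 2 * t ^ 2 / 2)

/-- The class `P_{Mon,d}(σ)`, as a predicate on the pair `(P, η)`. -/
def PMon (d : ℕ) (σ : ℝ) (P : Measure ((Fin d → ℝ) × ℝ)) (η : (Fin d → ℝ) → ℝ) : Prop :=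
  IsProbabilityMeasure P ∧ IsRegFn d P η ∧ Monotone η ∧ CondSubG d σ P η

/-- The margin class `P_{Mar,d}(τ, β, ν)`, as a predicate on the pair `(P, η)`. -/
def PMar (d : ℕ) (τ β ν : ℝ) (P : Measure ((Fin d → ℝ) × ℝ)) (η : (Fin d → ℝ) → ℝ) : Prop :=
  IsProbabilityMeasure P ∧ IsRegFn d P η ∧
    ∀ ξ : ℝ, ξ ∈ Set.Ioc (0 : ℝ) 1 →
      (P.map Prod.fst) (η ⁻¹' Set.Icc τ (τ + ν * ξ ^ β)) ≤ ENNReal.ofReal ξ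

/-- Support of a Borel measure: the points all of whose open neighbourhoods have
positive measure. -/
def measSupport {α : Type*} [TopologicalSpace α] [MeasurableSpace α] (μ : Measure α) : Set α :=
  {x | ∀ U : Set α, IsOpen U → x ∈ U → 0 < μ U}

/-- The regularity class `P_{Reg,d}(τ, θ, γ, λ)`, as a predicate on the pair `(P, η)`. -/
def PReg (d : ℕ) (τ θ γ lam : ℝ) (P : Measure ((Fin d → ℝ) × ℝ)) (η : (Fin d → ℝ) → ℝ) : Prop :=
  IsProbabilityMeasure P ∧ IsRegFn d P η ∧
    ∀ x ∈ {x | τ ≤ η x} ∩ measSupport (P.map Prod.fst), ∀ r : ℝ, r ∈ Set.Ioc (0:ℝ) 1 →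
      (ENNReal.ofReal (θ⁻¹ * r ^ d) ≤ (P.map Prod.fst) (Metric.closedBall x r) ∧
        (P.map Prod.fst) (Metric.closedBall x r) ≤ ENNReal.ofReal (θ * (2 * r) ^ d)) ∧
      (Metric.closedBall x r ∩ {z | τ + lam * r ^ γ ≤ η z}).Nonempty

/-- Indices `i` with `X i ≼ x`, ordered by increasing sup-norm distance to `x`,
ties broken by the original index ordering. -/
def nnOrder {d n : ℕ} (X : Fin n → (Fin d → ℝ)) (x : Fin d → ℝ) : List (Fin n) :=
  List.insertionSort
    (fun i j => ‖X i - x‖ < ‖X j - x‖ ∨ (‖X i - x‖ = ‖X j - x‖ ∧ i ≤ j))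
    ((List.finRange n).filter (fun i => decide (X i ≤ x)))

/-- The martingale sums `S_k = ∑_{j=1}^k (Y_{(j)}(x) - τ)/σ`. -/
def Smart {d n : ℕ} (σ τ : ℝ) (D : Fin n → (Fin d → ℝ) × ℝ) (x : Fin d → ℝ) (k : ℕ) : ℝ :=
  ((((nnOrder (fun i => (D i).1) x).take k).map (fun i => ((D i).2 - τ) / σ)).sum)

/-- The anytime-valid martingale p-value `p̂_{σ,τ}(x, D)`. -/
def phat {d n : ℕ} (σ τ : ℝ) (D : Fin n → (Fin d → ℝ) × ℝ) (x : Fin d → ℝ) : ℝ :=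
  ((List.range (nnOrder (fun i => (D i).1) x).length).map (fun k =>
      5.2 * Real.exp (-(max (Smart σ τ D x (k + 1)) 0) ^ 2 / (2.0808 * (k + 1))
        + Real.log (Real.log (2 * (k + 1))) / 0.72))).foldr min 1

/-- One iteration of the DAG testing procedure `R^ISS`. Edges point from parents to children:
`E a b` means `a` is a parent of `b`; `F` is the weight-one (polyforest) subrelation. -/
def RISSstep {I : Type*} [Fintype I] (E F : I → I → Prop) (α : ℝ) (p : I → ℝ)
    (R : Finset I) : Finset I :=
  let SL : Finset I := Finset.univ.filter (fun i => (∀ j, ¬ F i j) ∧ i ∉ R)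
  let SC : Finset I := Finset.univ.filter (fun i => i ∉ R ∧ ∀ j, F j i → j ∈ R)
  let budget : I → ℝ := fun i =>
    if i ∈ SC then
      ((SL.filter (fun j => j = i ∨ Relation.TransGen F i j)).card : ℝ) * α / (SL.card : ℝ)
    else 0
  let Il : Finset I := Finset.univ.filter (fun i => p i ≤ budget i)
  if Il = ∅ then R
  else R ∪ Il ∪ Finset.univ.filter (fun i => ∃ j ∈ Il, Relation.TransGen E i j)

/-- The DAG testing procedure `R^ISS_α` applied to a polyforest-weighted DAG `(I, E, w)`
(represented by the edge relation `E` and the weight-one subrelation `F`) and p-values `p`. -/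
def RISS {I : Type*} [Fintype I] (E F : I → I → Prop) (α : ℝ) (p : I → ℝ) : Finset I :=
  (RISSstep E F α p)^[Fintype.card I] ∅

/-- Edge relation of the DAG induced by the covariate points `z`. -/
def indE {d m : ℕ} (z : Fin m → (Fin d → ℝ)) (i0 i1 : Fin m) : Prop :=
  i0 ≠ i1 ∧ z i1 ≤ z i0 ∧ ∀ i2, z i1 ≤ z i2 → z i2 ≤ z i0 →
    (z i2 = z i0 ∧ i0 ≤ i2) ∨ (z i2 = z i1 ∧ i2 ≤ i1)

/-- Edge relation of the induced polyforest: among the induced-DAG parents of `i1`, keep the one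
of minimal sup-norm distance to `z i1`, ties broken by smallest index. -/
def indF {d m : ℕ} (z : Fin m → (Fin d → ℝ)) (i0 i1 : Fin m) : Prop :=
  indE z i0 i1 ∧ ∀ i, indE z i i1 →
    (‖z i0 - z i1‖ < ‖z i - z i1‖ ∨ (‖z i0 - z i1‖ = ‖z i - z i1‖ ∧ i0 ≤ i))

/-- The selection set `Â^{ISS}_{σ,τ,α,m}(D)`: the upper hull of the covariate points (among the
first `m` data points) whose hypotheses are rejected by `R^ISS` applied to the induced
polyforest-weighted DAG of `(X_1, …, X_m)` and the martingale p-values `p̂_{σ,τ}(X_i, D)`. -/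
def AISS {d n : ℕ} (σ τ α : ℝ) (m : ℕ) (hm : m ≤ n)
    (D : Fin n → (Fin d → ℝ) × ℝ) : Set (Fin d → ℝ) :=
  let z : Fin m → (Fin d → ℝ) := fun i => (D (Fin.castLE hm i)).1
  {x | ∃ i ∈ RISS (indE z) (indF z) α (fun i => phat σ τ D (z i)), z i ≤ x}

/-- `A` is a valid data-dependent selection set at level `α` for the class `PC`:
it is jointly measurable and satisfies the Type I error guarantee over `PC`. -/
def SelValid (d n : ℕ) (τ α : ℝ)
    (PC : Measure ((Fin d → ℝ) × ℝ) → ((Fin d → ℝ) → ℝ) → Prop)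
    (A : (Fin n → (Fin d → ℝ) × ℝ) → Set (Fin d → ℝ)) : Prop :=
  MeasurableSet {q : (Fin n → (Fin d → ℝ) × ℝ) × (Fin d → ℝ) | q.2 ∈ A q.1} ∧
  ∀ P η, PC P η →
    ENNReal.ofReal (1 - α) ≤ (Measure.pi fun _ : Fin n => P) {ω | A ω ⊆ {x | τ ≤ η x}}

end

/-- `A` almost surely outputs the upper hull of a subset of the first `m` covariate points,
for data drawn from any distribution in the class `PC`. -/
def SelUpperHull (d n m : ℕ)
    (PC : Measure ((Fin d → ℝ) × ℝ) → ((Fin d → ℝ) → ℝ) → Prop)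
    (A : (Fin n → (Fin d → ℝ) × ℝ) → Set (Fin d → ℝ)) : Prop :=
  ∀ P η, PC P η →
    ∀ᵐ ω ∂(Measure.pi fun _ : Fin n => P),
      ∃ J : Finset (Fin n), (∀ i ∈ J, (i : ℕ) < m) ∧
        A ω = {x | ∃ i ∈ J, (ω i).1 ≤ x}

/-!
The hard distribution is noiseless: `X` is uniform on the unit cube and `Y = η X`, where `η` is
increasing with `τ`-superlevel set the half-space `S = {∑ xᵢ ≥ 1/2}`. With probability at least
`1 - α ≥ 3/4` a valid selection set lies inside `S`, and it is then the upper hull of some of the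
first `m` sample points, all in `S`. The upper orthant of a point of `S` meets the slab
`{1/2 ≤ ∑ xᵢ ≤ 1/2 + t}` in volume at most `tᵈ`, and only if the point lies in the slab; for
`t = m^{-1/d}/2` the orthants therefore cover in expectation at most half of the slab, whose volume
is of order `t`. Markov's inequality turns this into an expected missed volume of order `m^{-1/d}`.
-/
noncomputable section

namespace UpperHullLowerBound

section NoiselessLaw

variable {d : ℕ}

def noiselessLaw (μ : Measure (Fin d → ℝ)) (η : (Fin d → ℝ) → ℝ) : Measure ((Fin d → ℝ) × ℝ) :=
  μ.map fun x => (x, η x)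

variable {μ : Measure (Fin d → ℝ)} {η : (Fin d → ℝ) → ℝ}

lemma mX_le : mX d ≤ (inferInstance : MeasurableSpace ((Fin d → ℝ) × ℝ)) :=
  measurable_fst.comap_le

lemma measurable_graph (hη : Measurable η) : Measurable fun x => (x, η x) :=
  measurable_id.prodMk hη

lemma isProbabilityMeasure_noiselessLaw [IsProbabilityMeasure μ] (hη : Measurable η) :
    IsProbabilityMeasure (noiselessLaw μ η) :=
  Measure.isProbabilityMeasure_map (measurable_graph hη).aemeasurable

lemma noiselessLaw_map_fst (hη : Measurable η) : (noiselessLaw μ η).map Prod.fst = μ := by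
  rw [noiselessLaw, Measure.map_map measurable_fst (measurable_graph hη)]
  exact Measure.map_id

lemma snd_ae_eq_noiselessLaw (hη : Measurable η) :
    (fun p => p.2) =ᵐ[noiselessLaw μ η] fun p => η p.1 :=
  (ae_map_iff (measurable_graph hη).aemeasurable
    (measurableSet_eq_fun measurable_snd (hη.comp measurable_fst))).mpr
    (Filter.Eventually.of_forall fun _ => rfl)

lemma isRegFn_noiselessLaw [IsProbabilityMeasure μ] (hη : Measurable η) (hint : Integrable η μ) :
    IsRegFn d (noiselessLaw μ η) η := by
  have := isProbabilityMeasure_noiselessLaw (μ := μ) hη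
  have hfst : Measurable[mX d] (Prod.fst : (Fin d → ℝ) × ℝ → Fin d → ℝ) := comap_measurable _
  have hint' : Integrable (fun p => η p.1) (noiselessLaw μ η) := by
    rw [← noiselessLaw_map_fst (μ := μ) hη] at hint
    exact hint.comp_measurable measurable_fst
  have h := condExp_congr_ae (m := mX d) (snd_ae_eq_noiselessLaw (μ := μ) hη)
  rw [condExp_of_stronglyMeasurable (f := fun p => η p.1) mX_le
    (hη.comp hfst).stronglyMeasurable hint'] at h
  exact ⟨hη, h.symm⟩

lemma condSubG_noiselessLaw [IsProbabilityMeasure μ] (hη : Measurable η) (σ : ℝ) :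
    CondSubG d σ (noiselessLaw μ η) η := by
  have := isProbabilityMeasure_noiselessLaw (μ := μ) hη
  intro t
  have hone : (fun p => exp (t * (p.2 - η p.1))) =ᵐ[noiselessLaw μ η] fun _ => (1 : ℝ) := by
    filter_upwards [snd_ae_eq_noiselessLaw hη] with p hp
    simp [hp]
  refine ⟨(integrable_const 1).congr hone.symm, ?_⟩
  filter_upwards [condExp_congr_ae (m := mX d) hone] with p hp
  rw [hp, condExp_const mX_le]
  exact one_le_exp (by positivity)

lemma pMon_noiselessLaw [IsProbabilityMeasure μ] (hη : Measurable η) (hint : Integrable η μ)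
    (hmono : Monotone η) (σ : ℝ) : PMon d σ (noiselessLaw μ η) η :=
  ⟨isProbabilityMeasure_noiselessLaw hη, isRegFn_noiselessLaw hη hint, hmono,
    condSubG_noiselessLaw hη σ⟩

end NoiselessLaw

section UnitCube

variable (d : ℕ)

def unitCubeMeasure : Measure (Fin d → ℝ) := volume.restrict (Icc 0 1)

instance : IsProbabilityMeasure (unitCubeMeasure d) :=
  ⟨by simp [unitCubeMeasure, Real.volume_Icc_pi]⟩

lemma measSupport_restrict_subset {α : Type*} [TopologicalSpace α] [MeasurableSpace α]
    [OpensMeasurableSpace α] {μ : Measure α} {s : Set α} (hs : IsClosed s) :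
    measSupport (μ.restrict s) ⊆ s := by
  intro x hx
  by_contra hxs
  have := hx sᶜ hs.isOpen_compl hxs
  simp [Measure.restrict_apply hs.measurableSet.compl] at this

lemma volume_closedBall_inter_unitInterval {y r : ℝ} (hy : y ∈ Icc (0 : ℝ) 1) (hr0 : 0 ≤ r)
    (hr1 : r ≤ 1) :
    ENNReal.ofReal r ≤ volume (Metric.closedBall y r ∩ Icc 0 1) ∧
      volume (Metric.closedBall y r ∩ Icc 0 1) ≤ ENNReal.ofReal (2 * r) := by
  rw [Real.closedBall_eq_Icc, Icc_inter_Icc, Real.volume_Icc]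
  obtain ⟨hy0, hy1⟩ := hy
  constructor <;> apply ENNReal.ofReal_le_ofReal <;> rw [max_def, min_def] <;> split_ifs <;>
    linarith

variable {d}

lemma unitCubeMeasure_closedBall {x : Fin d → ℝ} (hx : x ∈ Icc 0 1) {r : ℝ} (hr0 : 0 ≤ r)
    (hr1 : r ≤ 1) :
    ENNReal.ofReal (r ^ d) ≤ unitCubeMeasure d (Metric.closedBall x r) ∧
      unitCubeMeasure d (Metric.closedBall x r) ≤ ENNReal.ofReal ((2 * r) ^ d) := by
  have hprod : unitCubeMeasure d (Metric.closedBall x r) =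
      ∏ i, volume (Metric.closedBall (x i) r ∩ Icc 0 1) := by
    rw [unitCubeMeasure, Measure.restrict_apply' measurableSet_Icc, closedBall_pi x hr0,
      ← pi_univ_Icc, ← pi_inter_distrib, volume_pi_pi]
    rfl
  have hcoord i := volume_closedBall_inter_unitInterval (⟨hx.1 i, hx.2 i⟩ : x i ∈ Icc 0 1) hr0 hr1
  rw [hprod, ENNReal.ofReal_pow hr0, ENNReal.ofReal_pow (by positivity), ← Fin.prod_const,
    ← Fin.prod_const]
  exact ⟨Finset.prod_le_prod' fun i _ => (hcoord i).1, Finset.prod_le_prod' fun i _ => (hcoord i).2⟩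

end UnitCube

section RegressionFunction

def rampPow (γ s : ℝ) : ℝ := if 0 ≤ s then min s 1 ^ γ else -1

lemma measurable_rampPow (γ : ℝ) : Measurable (rampPow γ) :=
  Measurable.ite measurableSet_Ici ((measurable_id.min measurable_const).pow_const γ)
    measurable_const

lemma monotone_rampPow {γ : ℝ} (hγ : 0 ≤ γ) : Monotone (rampPow γ) := by
  intro s s' hss'
  unfold rampPow
  split_ifs with hs hs' hs'
  · exact rpow_le_rpow (le_min hs zero_le_one) (min_le_min_right 1 hss') hγ
  · exact absurd (hs.trans hss') hs'
  · exact (neg_one_lt_zero.trans_le (rpow_nonneg (le_min hs' zero_le_one) γ)).le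
  · exact le_rfl

lemma rampPow_nonneg_iff (γ s : ℝ) : 0 ≤ rampPow γ s ↔ 0 ≤ s := by
  unfold rampPow
  split_ifs with hs
  · exact iff_of_true (rpow_nonneg (le_min hs zero_le_one) γ) hs
  · exact iff_of_false (by norm_num) hs

lemma abs_rampPow_le_one {γ : ℝ} (hγ : 0 ≤ γ) (s : ℝ) : |rampPow γ s| ≤ 1 := by
  unfold rampPow
  split_ifs with hs
  · rw [abs_of_nonneg (rpow_nonneg (le_min hs zero_le_one) γ)]
    exact rpow_le_one (le_min hs zero_le_one) (min_le_right s 1) hγ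
  · simp

lemma rpow_le_rampPow {γ r s : ℝ} (hγ : 0 ≤ γ) (hr0 : 0 ≤ r) (hr1 : r ≤ 1) (hrs : r ≤ s) :
    r ^ γ ≤ rampPow γ s := by
  rw [rampPow, if_pos (hr0.trans hrs)]
  exact rpow_le_rpow hr0 (le_min hrs hr1) hγ

variable (d : ℕ) (τ lam γ : ℝ)

def sumRegFn (x : Fin d → ℝ) : ℝ := τ + lam * rampPow γ (∑ i, x i - 1 / 2)

variable {d τ lam γ}

lemma measurable_sumRegFn : Measurable (sumRegFn d τ lam γ) :=
  measurable_const.add <| measurable_const.mul <| (measurable_rampPow γ).comp <|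
    (Finset.measurable_sum _ fun i _ => measurable_pi_apply i).sub measurable_const

lemma monotone_sumRegFn (hlam : 0 ≤ lam) (hγ : 0 ≤ γ) : Monotone (sumRegFn d τ lam γ) := by
  intro x y hxy
  unfold sumRegFn
  gcongr
  exact monotone_rampPow hγ (by gcongr with i; exact hxy i)

lemma superlevel_sumRegFn (hlam : 0 < lam) :
    {x | τ ≤ sumRegFn d τ lam γ x} = {x : Fin d → ℝ | 1 / 2 ≤ ∑ i, x i} := by
  ext x
  simp only [mem_ofPred_eq, sumRegFn, le_add_iff_nonneg_right, mul_nonneg_iff_of_pos_left hlam,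
    rampPow_nonneg_iff, sub_nonneg]

lemma integrable_sumRegFn (μ : Measure (Fin d → ℝ)) [IsFiniteMeasure μ] (hγ : 0 ≤ γ) :
    Integrable (sumRegFn d τ lam γ) μ := by
  refine .of_bound measurable_sumRegFn.aestronglyMeasurable (|τ| + |lam|)
    (.of_forall fun x => ?_)
  rw [Real.norm_eq_abs, sumRegFn]
  calc |τ + lam * rampPow γ (∑ i, x i - 1 / 2)| ≤ |τ| + |lam| * |rampPow γ (∑ i, x i - 1 / 2)| :=
        (abs_add_le _ _).trans_eq (by rw [abs_mul])
    _ ≤ |τ| + |lam| := by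
        gcongr
        exact mul_le_of_le_one_right (abs_nonneg lam) (abs_rampPow_le_one hγ _)

end RegressionFunction

section HardInstance

variable {d : ℕ} {τ lam γ : ℝ}

lemma pMon_sumRegFn (σ : ℝ) (hlam : 0 ≤ lam) (hγ : 0 ≤ γ) :
    PMon d σ (noiselessLaw (unitCubeMeasure d) (sumRegFn d τ lam γ)) (sumRegFn d τ lam γ) :=
  pMon_noiselessLaw measurable_sumRegFn (integrable_sumRegFn _ hγ) (monotone_sumRegFn hlam hγ) σ

lemma pReg_sumRegFn (hd : 0 < d) (hlam : 0 < lam) (hγ : 0 ≤ γ) {θ : ℝ} (hθ : 1 ≤ θ) :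
    PReg d τ θ γ lam (noiselessLaw (unitCubeMeasure d) (sumRegFn d τ lam γ))
      (sumRegFn d τ lam γ) := by
  refine ⟨isProbabilityMeasure_noiselessLaw measurable_sumRegFn,
    isRegFn_noiselessLaw measurable_sumRegFn (integrable_sumRegFn _ hγ), ?_⟩
  rintro x ⟨hxS, hxμ⟩ r ⟨hr0, hr1⟩
  rw [noiselessLaw_map_fst measurable_sumRegFn] at hxμ ⊢
  rw [superlevel_sumRegFn hlam, mem_ofPred_eq] at hxS
  obtain ⟨hlow, hup⟩ :=
    unitCubeMeasure_closedBall (measSupport_restrict_subset isClosed_Icc hxμ) hr0.le hr1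
  refine ⟨⟨le_trans (ENNReal.ofReal_le_ofReal ?_) hlow, hup.trans (ENNReal.ofReal_le_ofReal ?_)⟩,
    fun i => x i + r, ?_, ?_⟩
  · exact mul_le_of_le_one_left (by positivity) (inv_le_one_of_one_le₀ hθ)
  · exact le_mul_of_one_le_left (by positivity) hθ
  · exact (dist_pi_le_iff hr0.le).2 fun i => by simp [abs_of_nonneg hr0.le]
  · have hd' : (1 : ℝ) ≤ d := by exact_mod_cast hd
    have hrs : r ≤ ∑ i, (x i + r) - 1 / 2 := by
      rw [Finset.sum_add_distrib, Finset.sum_const, Finset.card_univ, Fintype.card_fin,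
        nsmul_eq_mul]
      nlinarith
    simp only [mem_ofPred_eq, sumRegFn]
    gcongr
    exact rpow_le_rampPow hγ hr0.le hr1 hrs

end HardInstance

section Slab

variable {d : ℕ}

def sumSlab (d : ℕ) (a t : ℝ) : Set (Fin d → ℝ) := {x | a ≤ ∑ i, x i ∧ ∑ i, x i ≤ a + t}

lemma measurableSet_sumSlab (a t : ℝ) : MeasurableSet (sumSlab d a t) :=
  have hsum : Measurable fun x : Fin d → ℝ => ∑ i, x i :=
    Finset.measurable_sum _ fun i _ => measurable_pi_apply i
  (measurableSet_le measurable_const hsum).inter (measurableSet_le hsum measurable_const)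

lemma volume_sumSlab_inter_Ici_le {a t : ℝ} (ht : 0 ≤ t) {z : Fin d → ℝ} (hz : a ≤ ∑ i, z i) :
    volume (sumSlab d a t ∩ Ici z) ≤
      (sumSlab d a t).indicator (fun _ => ENNReal.ofReal (t ^ d)) z := by
  by_cases hzs : z ∈ sumSlab d a t
  · rw [indicator_of_mem hzs]
    have hsub : sumSlab d a t ∩ Ici z ⊆ Icc z (z + fun _ => t) := by
      rintro x ⟨⟨-, hx⟩, hzx⟩
      refine ⟨hzx, fun j => ?_⟩
      have hj := Finset.single_le_sum (fun k _ => sub_nonneg.2 (hzx k)) (Finset.mem_univ j)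
      rw [Finset.sum_sub_distrib] at hj
      simp only [Pi.add_apply]
      linarith [hzs.1]
    calc volume (sumSlab d a t ∩ Ici z) ≤ volume (Icc z (z + fun _ => t)) := measure_mono hsub
      _ = ENNReal.ofReal (t ^ d) := by simp [Real.volume_Icc_pi, ENNReal.ofReal_pow ht]
  · have hempty : sumSlab d a t ∩ Ici z = ∅ :=
      eq_empty_of_forall_notMem fun x ⟨⟨_, hx⟩, hzx⟩ =>
        hzs ⟨hz, (Finset.sum_le_sum fun i _ => hzx i).trans hx⟩
    simp [hempty]

def sumShear (k : ℕ) : Matrix (Fin (k + 1)) (Fin (k + 1)) ℝ :=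
  Matrix.of fun i j => if i = 0 ∨ i = j then 1 else 0

lemma sumShear_mulVec_zero {k : ℕ} (x : Fin (k + 1) → ℝ) :
    ((sumShear k).mulVec x) 0 = ∑ i, x i := by
  simp [sumShear, Matrix.mulVec, dotProduct]

lemma sumShear_mulVec_succ {k : ℕ} (x : Fin (k + 1) → ℝ) (i : Fin k) :
    ((sumShear k).mulVec x) i.succ = x i.succ := by
  simp [sumShear, Matrix.mulVec, dotProduct]

lemma det_sumShear (k : ℕ) : (sumShear k).det = 1 := by
  rw [Matrix.det_of_isUpperTriangular]
  · simp [sumShear]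
  · intro i j hji
    have hji : j < i := hji
    have hi : i ≠ 0 := by rintro rfl; exact Fin.not_lt_zero j hji
    simp [sumShear, hi, hji.ne']

def slabBox (k : ℕ) (t w : ℝ) : Set (Fin (k + 1) → ℝ) :=
  univ.pi (Fin.cons (Icc (1 / 2) (1 / 2 + t)) fun _ => Icc 0 w)

lemma volume_slabBox {k : ℕ} {t w : ℝ} (ht : 0 ≤ t) (hw : 0 ≤ w) :
    volume (slabBox k t w) = ENNReal.ofReal (t * w ^ k) := by
  rw [slabBox, volume_pi_pi, Fin.prod_univ_succ]
  simp [Real.volume_Icc, ENNReal.ofReal_mul ht, ENNReal.ofReal_pow hw]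

lemma toLin'_sumShear_preimage_subset {k : ℕ} {t w : ℝ} (ht1 : t ≤ 1 / 2) (hw1 : w ≤ 1)
    (hkw : k * w ≤ 1 / 2) :
    Matrix.toLin' (sumShear k) ⁻¹' slabBox k t w ⊆ sumSlab (k + 1) (1 / 2) t ∩ Icc 0 1 := by
  intro x hx
  simp only [slabBox, mem_preimage, mem_univ_pi, Matrix.toLin'_apply] at hx
  have hsum := hx 0
  rw [Fin.cons_zero, sumShear_mulVec_zero] at hsum
  have hrest (i : Fin k) : x i.succ ∈ Icc 0 w := by
    simpa [sumShear_mulVec_succ] using hx i.succ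
  have hrest0 : 0 ≤ ∑ i : Fin k, x i.succ := Finset.sum_nonneg fun i _ => (hrest i).1
  have hrestw : ∑ i : Fin k, x i.succ ≤ k * w := by
    simpa using Finset.sum_le_sum fun i (_ : i ∈ Finset.univ) => (hrest i).2
  have hcoord : ∀ i, x i ∈ Icc (0 : ℝ) 1 := by
    rw [Fin.sum_univ_succ] at hsum
    refine Fin.cases ⟨by linarith [hsum.1], by linarith [hsum.2]⟩ fun i => ?_
    exact ⟨(hrest i).1, (hrest i).2.trans hw1⟩
  exact ⟨hsum, fun i => (hcoord i).1, fun i => (hcoord i).2⟩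

-- The slab contains the preimage of a box of volume `t wᵏ` under the volume-preserving shear
-- `x ↦ (∑ xᵢ, x₁, …, xₖ)`.
lemma ofReal_le_unitCubeMeasure_sumSlab (hd : 0 < d) {t : ℝ} (ht0 : 0 ≤ t) (ht1 : t ≤ 1 / 2) :
    ENNReal.ofReal (t * (1 / (2 * d)) ^ (d - 1)) ≤ unitCubeMeasure d (sumSlab d (1 / 2) t) := by
  obtain ⟨k, rfl⟩ : ∃ k, d = k + 1 := ⟨d - 1, by omega⟩
  set w : ℝ := 1 / (2 * ((k + 1 : ℕ) : ℝ))
  have hw : 0 ≤ w := by positivity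
  have hw1 : w ≤ 1 := by
    simp only [w]
    rw [div_le_one (by positivity)]
    push_cast
    linarith
  have hkw : k * w ≤ 1 / 2 := by
    simp only [w]
    push_cast
    rw [mul_one_div, div_le_div_iff₀ (by positivity) two_pos]
    linarith
  calc ENNReal.ofReal (t * w ^ k)
      = volume (Matrix.toLin' (sumShear k) ⁻¹' slabBox k t w) := by
        rw [Measure.addHaar_preimage_linearMap _ (by simp [det_sumShear]), LinearMap.det_toLin',
          det_sumShear, volume_slabBox ht0 hw]
        simp
    _ ≤ volume (sumSlab (k + 1) (1 / 2) t ∩ Icc 0 1) :=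
        measure_mono (toLin'_sumShear_preimage_subset ht1 hw1 hkw)
    _ = unitCubeMeasure (k + 1) (sumSlab (k + 1) (1 / 2) t) :=
        (Measure.restrict_apply (measurableSet_sumSlab _ _)).symm

end Slab

section Expectation

lemma lintegral_sum_indicator_pi {ι α β : Type*} [Fintype ι] [MeasurableSpace α]
    [MeasurableSpace β] (P : Measure α) [IsProbabilityMeasure P] {f : α → β} (hf : Measurable f)
    {B : Set β} (hB : MeasurableSet B) (c : ℝ≥0∞) (s : Finset ι) :
    ∫⁻ ω, ∑ i ∈ s, B.indicator (fun _ => c) (f (ω i)) ∂Measure.pi (fun _ => P) =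
      s.card * (c * P (f ⁻¹' B)) := by
  have hmeas : Measurable fun a => B.indicator (fun _ => c) (f a) :=
    (measurable_const.indicator hB).comp hf
  have hterm (i : ι) :
      ∫⁻ ω, B.indicator (fun _ => c) (f (ω i)) ∂Measure.pi (fun _ => P) = c * P (f ⁻¹' B) := by
    rw [(measurePreserving_eval (fun _ => P) i).lintegral_comp hmeas,
      ← lintegral_indicator_const (hf hB) c]
    rfl
  rw [lintegral_finsetSum s fun i _ => (show Measurable fun ω : ι → α =>
    B.indicator (fun _ => c) (f (ω i)) from hmeas.comp (measurable_pi_apply i))]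
  simp [hterm]

lemma mul_tsub_le_lintegral {Ω : Type*} [MeasurableSpace Ω] {ν : Measure Ω} {F G : Ω → ℝ≥0∞}
    (hF : Measurable F) (hG : Measurable G) {V q r : ℝ≥0∞} (hV : V ≠ ∞)
    (hq : q ≤ ν {ω | V ≤ F ω + G ω}) (hGint : ∫⁻ ω, G ω ∂ν ≤ V * r) :
    V * (q - r) ≤ ∫⁻ ω, F ω ∂ν := by
  rw [ENNReal.mul_sub fun _ _ => hV, tsub_le_iff_right]
  calc V * q ≤ V * ν {ω | V ≤ F ω + G ω} := by gcongr
    _ ≤ ∫⁻ ω, F ω + G ω ∂ν := mul_meas_ge_le_lintegral₀ (hF.add hG).aemeasurable V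
    _ = ∫⁻ ω, F ω ∂ν + ∫⁻ ω, G ω ∂ν := lintegral_add_left hF G
    _ ≤ ∫⁻ ω, F ω ∂ν + V * r := by gcongr

end Expectation

section LowerBound

variable {d : ℕ}

lemma measure_sumSlab_le_of_upperHull {ι : Type*} {μ : Measure (Fin d → ℝ)} (hμ : μ ≤ volume)
    {a t : ℝ} (ht : 0 ≤ t) {z : ι → Fin d → ℝ} {J s : Finset ι} (hJs : J ⊆ s)
    (hJ : {x | ∃ i ∈ J, z i ≤ x} ⊆ {x | a ≤ ∑ k, x k}) :
    μ (sumSlab d a t) ≤ μ ({x | a ≤ ∑ k, x k} \ {x | ∃ i ∈ J, z i ≤ x}) +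
      ∑ i ∈ s, (sumSlab d a t).indicator (fun _ => ENNReal.ofReal (t ^ d)) (z i) := by
  set S : Set (Fin d → ℝ) := {x | a ≤ ∑ k, x k}
  set A : Set (Fin d → ℝ) := {x | ∃ i ∈ J, z i ≤ x}
  have hcover : sumSlab d a t ⊆ (S \ A) ∪ ⋃ i ∈ J, sumSlab d a t ∩ Ici (z i) := by
    intro x hx
    by_cases hxA : x ∈ A
    · obtain ⟨i, hi, hzx⟩ := hxA
      exact Or.inr (mem_biUnion hi ⟨hx, hzx⟩)
    · exact Or.inl ⟨hx.1, hxA⟩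
  calc μ (sumSlab d a t) ≤ μ (S \ A) + ∑ i ∈ J, μ (sumSlab d a t ∩ Ici (z i)) :=
        (measure_mono hcover).trans <| (measure_union_le _ _).trans <| by
          gcongr; exact measure_biUnion_finset_le _ _
    _ ≤ μ (S \ A) + ∑ i ∈ J, (sumSlab d a t).indicator (fun _ => ENNReal.ofReal (t ^ d)) (z i) := by
        gcongr with i hi
        exact (Measure.le_iff'.1 hμ _).trans (volume_sumSlab_inter_Ici_le ht (hJ ⟨i, hi, le_rfl⟩))
    _ ≤ _ := by gcongr

lemma natCast_mul_rpow_neg_one_div_div_two_pow (hd : 0 < d) {m : ℕ} (hm : 1 ≤ m) :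
    (m : ℝ) * ((m : ℝ) ^ (-(1 / (d : ℝ))) / 2) ^ d = (1 / 2) ^ d := by
  have hm0 : (0 : ℝ) < m := by exact_mod_cast hm
  rw [div_pow, ← rpow_natCast ((m : ℝ) ^ _), ← rpow_mul hm0.le,
    show -(1 / (d : ℝ)) * d = -1 by field_simp, rpow_neg_one, one_div_pow]
  field_simp

lemma rpow_neg_one_div_div_two_le_half {m : ℕ} (hm : 1 ≤ m) :
    (m : ℝ) ^ (-(1 / (d : ℝ))) / 2 ≤ 1 / 2 := by
  have : (m : ℝ) ^ (-(1 / (d : ℝ))) ≤ 1 :=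
    rpow_le_one_of_one_le_of_nonpos (by exact_mod_cast hm) (by simp)
  linarith

lemma lintegral_sum_indicator_sumSlab_le {n m : ℕ} {t : ℝ} (hmt : (m : ℝ) * t ^ d ≤ 1 / 2)
    {P : Measure ((Fin d → ℝ) × ℝ)} [IsProbabilityMeasure P]
    (hP : P.map Prod.fst = unitCubeMeasure d) :
    ∫⁻ ω, ∑ i ∈ Finset.univ.filter (fun i : Fin n => (i : ℕ) < m),
        (sumSlab d (1 / 2) t).indicator (fun _ => ENNReal.ofReal (t ^ d)) (ω i).1
      ∂Measure.pi (fun _ : Fin n => P) ≤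
      unitCubeMeasure d (sumSlab d (1 / 2) t) * ENNReal.ofReal (1 / 2) := by
  rw [lintegral_sum_indicator_pi P measurable_fst (measurableSet_sumSlab _ _),
    ← Measure.map_apply measurable_fst (measurableSet_sumSlab _ _), hP, Fin.card_filter_val_lt]
  calc ((min n m : ℕ) : ℝ≥0∞) * (ENNReal.ofReal (t ^ d) * unitCubeMeasure d (sumSlab d (1 / 2) t))
      ≤ m * (ENNReal.ofReal (t ^ d) * unitCubeMeasure d (sumSlab d (1 / 2) t)) := by
        gcongr
        exact min_le_right n m
    _ ≤ unitCubeMeasure d (sumSlab d (1 / 2) t) * ENNReal.ofReal (1 / 2) := by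
        rw [← mul_assoc, ← ENNReal.ofReal_natCast, ← ENNReal.ofReal_mul (Nat.cast_nonneg m),
          mul_comm]
        gcongr

lemma ofReal_le_lintegral_unitCubeMeasure_diff (hd : 0 < d) {n m : ℕ} (hm : 1 ≤ m) {α : ℝ}
    (hα : α ≤ 1 / 4) {P : Measure ((Fin d → ℝ) × ℝ)} [IsProbabilityMeasure P]
    (hP : P.map Prod.fst = unitCubeMeasure d) {A : (Fin n → (Fin d → ℝ) × ℝ) → Set (Fin d → ℝ)}
    (hAm : MeasurableSet {q : (Fin n → (Fin d → ℝ) × ℝ) × (Fin d → ℝ) | q.2 ∈ A q.1})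
    (hAS : ENNReal.ofReal (1 - α) ≤
      Measure.pi (fun _ : Fin n => P) {ω | A ω ⊆ {x | 1 / 2 ≤ ∑ i, x i}})
    (hhull : ∀ᵐ ω ∂Measure.pi (fun _ : Fin n => P), ∃ J : Finset (Fin n),
      (∀ i ∈ J, (i : ℕ) < m) ∧ A ω = {x | ∃ i ∈ J, (ω i).1 ≤ x}) :
    ENNReal.ofReal ((1 / (2 * d)) ^ (d - 1) / 8 * (m : ℝ) ^ (-(1 / (d : ℝ)))) ≤
      ∫⁻ ω, unitCubeMeasure d ({x | 1 / 2 ≤ ∑ i, x i} \ A ω) ∂Measure.pi (fun _ : Fin n => P) := by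
  set S : Set (Fin d → ℝ) := {x | 1 / 2 ≤ ∑ i, x i}
  set t : ℝ := (m : ℝ) ^ (-(1 / (d : ℝ))) / 2
  set V := unitCubeMeasure d (sumSlab d (1 / 2) t)
  set s := Finset.univ.filter fun i : Fin n => (i : ℕ) < m
  set G : (Fin n → (Fin d → ℝ) × ℝ) → ℝ≥0∞ := fun ω =>
    ∑ i ∈ s, (sumSlab d (1 / 2) t).indicator (fun _ => ENNReal.ofReal (t ^ d)) (ω i).1
  have ht0 : 0 ≤ t := by positivity
  have ht1 : t ≤ 1 / 2 := rpow_neg_one_div_div_two_le_half hm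
  have hF : Measurable fun ω => unitCubeMeasure d (S \ A ω) :=
    measurable_measure_prodMk_left
      (((measurableSet_le measurable_const (Finset.measurable_sum _ fun i _ =>
        measurable_pi_apply i)).preimage measurable_snd).diff hAm)
  have hG : Measurable G := Finset.measurable_sum _ fun i _ =>
    ((measurable_const.indicator (measurableSet_sumSlab _ _)).comp measurable_fst).comp
      (measurable_pi_apply i)
  have hevent : ENNReal.ofReal (1 - α) ≤
      Measure.pi (fun _ : Fin n => P) {ω | V ≤ unitCubeMeasure d (S \ A ω) + G ω} := by
    refine hAS.trans (measure_mono_ae ?_)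
    filter_upwards [hhull] with ω ⟨J, hJm, hAJ⟩ (hAS' : A ω ⊆ S)
    change V ≤ unitCubeMeasure d (S \ A ω) + G ω
    rw [hAJ] at hAS' ⊢
    exact measure_sumSlab_le_of_upperHull Measure.restrict_le_self ht0
      (fun i hi => Finset.mem_filter.2 ⟨Finset.mem_univ _, hJm i hi⟩) hAS'
  have hGint : ∫⁻ ω, G ω ∂Measure.pi (fun _ : Fin n => P) ≤ V * ENNReal.ofReal (1 / 2) := by
    refine lintegral_sum_indicator_sumSlab_le ?_ hP
    rw [natCast_mul_rpow_neg_one_div_div_two_pow hd hm]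
    exact pow_le_of_le_one (by norm_num) (by norm_num) hd.ne'
  calc ENNReal.ofReal ((1 / (2 * d)) ^ (d - 1) / 8 * (m : ℝ) ^ (-(1 / (d : ℝ))))
      = ENNReal.ofReal (t * (1 / (2 * d)) ^ (d - 1)) * ENNReal.ofReal (1 / 4) := by
        rw [← ENNReal.ofReal_mul (by positivity)]
        congr 1
        simp only [t]
        ring
    _ ≤ V * (ENNReal.ofReal (1 - α) - ENNReal.ofReal (1 / 2)) := by
        rw [← ENNReal.ofReal_sub _ (by norm_num)]
        gcongr
        · exact ofReal_le_unitCubeMeasure_sumSlab hd ht0 ht1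
        · linarith
    _ ≤ ∫⁻ ω, unitCubeMeasure d (S \ A ω) ∂Measure.pi (fun _ : Fin n => P) :=
        mul_tsub_le_lintegral hF hG (measure_ne_top _ _) hevent hGint

end LowerBound

end UpperHullLowerBound

end

open UpperHullLowerBound

/-- Proposition A.5: there exists `c ∈ (0,1)`, depending only on `d`, such that the worst-case
(over `P' = P_{Mon,d}(σ) ∩ P_{Reg,d}(τ,θ,γ,λ)`) best-case (over valid selection sets that are
a.s. upper hulls of subsets of the first `m` covariate points) expected regret is at least
`c m^{-1/d}`. -/
theorem statement14 (d : ℕ) (hd : 0 < d) :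
    ∃ c : ℝ, c ∈ Set.Ioo (0 : ℝ) 1 ∧
      ∀ (α : ℝ), α ∈ Set.Ioc (0 : ℝ) (1 / 4) →
      ∀ (n : ℕ), 0 < n → ∀ (m : ℕ), 1 ≤ m → m ≤ n →
      ∀ (τ σ γ lam θ : ℝ), 0 < σ → 0 < γ → 0 < lam → 1 < θ →
        ENNReal.ofReal (c * ((m : ℝ)) ^ (-(1 / (d : ℝ)))) ≤
          ⨆ (P : Measure ((Fin d → ℝ) × ℝ)) (η : (Fin d → ℝ) → ℝ)
              (_ : PMon d σ P η ∧ PReg d τ θ γ lam P η),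
            ⨅ (A : (Fin n → (Fin d → ℝ) × ℝ) → Set (Fin d → ℝ))
                (_ : SelValid d n τ α (fun P' η' => PMon d σ P' η' ∧ PReg d τ θ γ lam P' η') A ∧
                  SelUpperHull d n m
                    (fun P' η' => PMon d σ P' η' ∧ PReg d τ θ γ lam P' η') A),
              ∫⁻ ω, (P.map Prod.fst) ({x | τ ≤ η x} \ A ω)
                ∂(Measure.pi fun _ : Fin n => P) := by
  have hw : 0 < 1 / (2 * (d : ℝ)) := by positivity
  have hw1 : 1 / (2 * (d : ℝ)) ≤ 1 := by
    rw [div_le_one (by positivity)]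
    linarith [(Nat.one_le_cast (α := ℝ)).2 hd]
  refine ⟨(1 / (2 * d)) ^ (d - 1) / 8, ⟨by positivity, ?_⟩, ?_⟩
  · linarith [pow_le_one₀ (n := d - 1) hw.le hw1]
  intro α hα n _ m hm _ τ σ γ lam θ _ hγ hlam hθ
  let η := sumRegFn d τ lam γ
  have hP : PMon d σ (noiselessLaw (unitCubeMeasure d) η) η ∧
      PReg d τ θ γ lam (noiselessLaw (unitCubeMeasure d) η) η :=
    ⟨pMon_sumRegFn σ hlam.le hγ.le, pReg_sumRegFn hd hlam hγ.le hθ.le⟩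
  have : IsProbabilityMeasure (noiselessLaw (unitCubeMeasure d) η) := hP.1.1
  refine le_iSup_of_le _ <| le_iSup_of_le _ <| le_iSup_of_le hP <| le_iInf fun A =>
    le_iInf fun ⟨⟨hAm, hAS⟩, hhull⟩ => ?_
  have hAS := hAS _ _ hP
  rw [superlevel_sumRegFn hlam] at hAS
  rw [superlevel_sumRegFn hlam, noiselessLaw_map_fst measurable_sumRegFn]
  exact ofReal_le_lintegral_unitCubeMeasure_diff hd hm hα.2
    (noiselessLaw_map_fst measurable_sumRegFn) hAm hAS (hhull _ _ hP)
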